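/- arXiv:2504.12843 — 3 statements merged into one kernel-verified Lean document; each statement's English description precedes it below -/
import Mathlib

section
/- Let ℋ be a standard subproduct system arising from a quadratic ideal, i.e., a maximal subproduct system with prescribed fibres H₀ = ℂ, H₁, H₂ ⊆ H₁⊗H₁ and H_n = ⋂_{i+j=n, i,j≥1} H_i ⊗ H_j for n > 2. Then for all m ≥ 2, H_{m+1} = (H₁ ⊗ H_m) ∩ (H_m ⊗ H₁). -/
open TensorProduct

/-- The product of a subspace of `V^{⊗i}` and a subspace of `V^{⊗j}`, as a
subspace of `V^{⊗(i+j)}`. -/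
noncomputable def tpMul {V : Type*} [AddCommGroup V] [Module ℂ V] (i j : ℕ)
    (p : Submodule ℂ (⨂[ℂ]^i V)) (q : Submodule ℂ (⨂[ℂ]^j V)) :
    Submodule ℂ (⨂[ℂ]^(i + j) V) :=
  LinearMap.range
    ((TensorPower.mulEquiv (R := ℂ) (M := V) (n := i) (m := j)).toLinearMap ∘ₗ
      TensorProduct.map p.subtype q.subtype)

section Aux

variable {V : Type*} [AddCommGroup V] [Module ℂ V]

/-- The multiplication of tensor powers as a bilinear map. -/
noncomputable def mulB (i j : ℕ) : (⨂[ℂ]^i V) →ₗ[ℂ] (⨂[ℂ]^j V) →ₗ[ℂ] ⨂[ℂ]^(i+j) V :=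
  (TensorProduct.mk ℂ _ _).compr₂
    (TensorPower.mulEquiv (R := ℂ) (M := V) (n := i) (m := j)).toLinearMap

lemma mulB_eq_gMul {i j : ℕ} (x : ⨂[ℂ]^i V) (y : ⨂[ℂ]^j V) :
    mulB i j x y = @GradedMonoid.GMul.mul ℕ (fun n => ⨂[ℂ]^n V) _ _ i j x y := rfl

lemma mul_mem_tpMul {i j : ℕ} {p : Submodule ℂ (⨂[ℂ]^i V)} {q : Submodule ℂ (⨂[ℂ]^j V)}
    {x : ⨂[ℂ]^i V} {y : ⨂[ℂ]^j V} (hx : x ∈ p) (hy : y ∈ q) :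
    mulB i j x y ∈ tpMul i j p q :=
  ⟨⟨x, hx⟩ ⊗ₜ ⟨y, hy⟩, rfl⟩

lemma tpMul_le {i j : ℕ} {p : Submodule ℂ (⨂[ℂ]^i V)} {q : Submodule ℂ (⨂[ℂ]^j V)}
    {X : Submodule ℂ (⨂[ℂ]^(i+j) V)}
    (hX : ∀ x ∈ p, ∀ y ∈ q, mulB i j x y ∈ X) : tpMul i j p q ≤ X := by
  rintro z ⟨t, rfl⟩
  induction t using TensorProduct.induction_on with
  | zero => simpa using X.zero_mem
  | tmul a b => exact hX a a.2 b b.2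
  | add s t hs ht => simpa [map_add] using X.add_mem hs ht

lemma tpMul_mono {i j : ℕ} {p p' : Submodule ℂ (⨂[ℂ]^i V)} {q q' : Submodule ℂ (⨂[ℂ]^j V)}
    (hp : p ≤ p') (hq : q ≤ q') : tpMul i j p q ≤ tpMul i j p' q' :=
  tpMul_le fun _ hx _ hy => mul_mem_tpMul (hp hx) (hq hy)

/-- Transport of submodules of tensor powers along an equality of exponents. -/
noncomputable def mapC {a b : ℕ} (h : a = b) (S : Submodule ℂ (⨂[ℂ]^a V)) :
    Submodule ℂ (⨂[ℂ]^b V) :=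
  Submodule.map (TensorPower.cast ℂ V h).toLinearMap S

lemma mapC_rfl {a : ℕ} (h : a = a) (S : Submodule ℂ (⨂[ℂ]^a V)) : mapC h S = S := by
  rw [mapC, TensorPower.cast_refl]; simp

lemma eqrec_eq_mapC {a b : ℕ} (h : a = b) (S : Submodule ℂ (⨂[ℂ]^a V)) :
    h ▸ S = mapC h S := by subst h; rw [mapC_rfl]

lemma mapC_mapC {a b c : ℕ} (h1 : a = b) (h2 : b = c) (S : Submodule ℂ (⨂[ℂ]^a V)) :
    mapC h2 (mapC h1 S) = mapC (h1.trans h2) S := by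
  subst h1; subst h2; rw [mapC_rfl, mapC_rfl]

lemma mapC_mono {a b : ℕ} (h : a = b) {S T : Submodule ℂ (⨂[ℂ]^a V)} (hst : S ≤ T) :
    mapC h S ≤ mapC h T := Submodule.map_mono hst

lemma mapC_inf {a b : ℕ} (h : a = b) (S T : Submodule ℂ (⨂[ℂ]^a V)) :
    mapC h (S ⊓ T) = mapC h S ⊓ mapC h T := by
  subst h; rw [mapC_rfl, mapC_rfl, mapC_rfl]

lemma mapC_top {a b : ℕ} (h : a = b) :
    mapC h (⊤ : Submodule ℂ (⨂[ℂ]^a V)) = ⊤ := by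
  subst h; rw [mapC_rfl]

lemma mem_mapC {a b : ℕ} (h : a = b) {S : Submodule ℂ (⨂[ℂ]^a V)} {x : ⨂[ℂ]^b V} :
    x ∈ mapC h S ↔ (TensorPower.cast ℂ V h).symm x ∈ S :=
  Submodule.mem_map_equiv (e := TensorPower.cast ℂ V h) S

lemma mapC_eq_symm {a b : ℕ} (h : a = b) {S : Submodule ℂ (⨂[ℂ]^a V)}
    {T : Submodule ℂ (⨂[ℂ]^b V)} (he : mapC h S = T) : S = mapC h.symm T := by
  subst he; rw [mapC_mapC, mapC_rfl]

lemma tpMul_mapC_left {p' p q : ℕ} (h0 : p' = p) (S : Submodule ℂ (⨂[ℂ]^p' V))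
    (T : Submodule ℂ (⨂[ℂ]^q V)) :
    tpMul p q (mapC h0 S) T = mapC (congrArg (· + q) h0) (tpMul p' q S T) := by
  subst h0; rw [mapC_rfl, mapC_rfl]

lemma tpMul_mapC_right {p q' q : ℕ} (h0 : q' = q) (S : Submodule ℂ (⨂[ℂ]^p V))
    (T : Submodule ℂ (⨂[ℂ]^q' V)) :
    tpMul p q S (mapC h0 T) = mapC (congrArg (p + ·) h0) (tpMul p q' S T) := by
  subst h0; rw [mapC_rfl, mapC_rfl]

lemma tpMul_assoc {a b c : ℕ} (A : Submodule ℂ (⨂[ℂ]^a V)) (B : Submodule ℂ (⨂[ℂ]^b V))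
    (C : Submodule ℂ (⨂[ℂ]^c V)) :
    mapC (add_assoc a b c) (tpMul (a+b) c (tpMul a b A B) C)
      = tpMul a (b+c) A (tpMul b c B C) := by
  apply le_antisymm
  · rw [mapC, Submodule.map_le_iff_le_comap]
    refine tpMul_le fun u hu w hw => ?_
    have key : tpMul a b A B ≤ Submodule.comap
        ((TensorPower.cast ℂ V (add_assoc a b c)).toLinearMap ∘ₗ (mulB (a+b) c).flip w)
        (tpMul a (b+c) A (tpMul b c B C)) := by
      refine tpMul_le fun x hx y hy => ?_
      simp only [Submodule.mem_comap, LinearMap.coe_comp, Function.comp_apply,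
        LinearMap.flip_apply, LinearEquiv.coe_coe]
      rw [mulB_eq_gMul, mulB_eq_gMul, TensorPower.mul_assoc]
      exact mul_mem_tpMul hx (mul_mem_tpMul hy hw)
    exact key hu
  · refine tpMul_le fun x hx w hw => ?_
    have key : tpMul b c B C ≤ Submodule.comap (mulB a (b+c) x)
        (mapC (add_assoc a b c) (tpMul (a+b) c (tpMul a b A B) C)) := by
      refine tpMul_le fun y hy z hz => ?_
      simp only [Submodule.mem_comap]
      rw [mem_mapC, mulB_eq_gMul, mulB_eq_gMul, ← TensorPower.mul_assoc,
        LinearEquiv.symm_apply_apply]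
      exact mul_mem_tpMul (mul_mem_tpMul hx hy) hz
    exact key hw

lemma range_map_top_inf {M N : Type*} [AddCommGroup M] [AddCommGroup N]
    [Module ℂ M] [Module ℂ N] (A : Submodule ℂ M) (B : Submodule ℂ N) :
    LinearMap.range (TensorProduct.map A.subtype (⊤ : Submodule ℂ N).subtype) ⊓
      LinearMap.range (TensorProduct.map (⊤ : Submodule ℂ M).subtype B.subtype) ≤
      LinearMap.range (TensorProduct.map A.subtype B.subtype) := by
  have h1 : LinearMap.range (TensorProduct.map A.subtype (⊤ : Submodule ℂ N).subtype)
      = LinearMap.range (LinearMap.rTensor N A.subtype) := by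
    rw [LinearMap.rTensor, TensorProduct.range_map_eq_span_tmul,
      TensorProduct.range_map_eq_span_tmul]
    congr 1
    ext t
    constructor
    · rintro ⟨m, n, rfl⟩; exact ⟨m, ↑n, rfl⟩
    · rintro ⟨m, n, rfl⟩; exact ⟨m, ⟨n, trivial⟩, rfl⟩
  have h2 : LinearMap.range (TensorProduct.map (⊤ : Submodule ℂ M).subtype B.subtype)
      = LinearMap.range (LinearMap.lTensor M B.subtype) := by
    rw [LinearMap.lTensor, TensorProduct.range_map_eq_span_tmul,
      TensorProduct.range_map_eq_span_tmul]
    congr 1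
    ext t
    constructor
    · rintro ⟨m, n, rfl⟩; exact ⟨↑m, n, rfl⟩
    · rintro ⟨m, n, rfl⟩; exact ⟨⟨m, trivial⟩, n, rfl⟩
  intro x hx
  obtain ⟨hx1, hx2⟩ := hx
  rw [h1] at hx1
  rw [h2] at hx2
  obtain ⟨y, rfl⟩ := hx1
  have exB : Function.Exact (LinearMap.lTensor M B.subtype) (LinearMap.lTensor M B.mkQ) :=
    Module.Flat.lTensor_exact M (LinearMap.exact_subtype_mkQ B)
  have hker : LinearMap.lTensor M B.mkQ (LinearMap.rTensor N A.subtype y) = 0 := by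
    obtain ⟨t, ht⟩ := hx2
    rw [← ht]
    exact exB.apply_apply_eq_zero t
  have hcomm : LinearMap.lTensor M B.mkQ (LinearMap.rTensor N A.subtype y)
      = LinearMap.rTensor (N ⧸ B) A.subtype (LinearMap.lTensor (↥A) B.mkQ y) := by
    rw [← LinearMap.comp_apply, ← LinearMap.comp_apply, LinearMap.lTensor_comp_rTensor,
      LinearMap.rTensor_comp_lTensor]
  have hinj : Function.Injective (LinearMap.rTensor (N ⧸ B) A.subtype) :=
    Module.Flat.rTensor_preserves_injective_linearMap A.subtype A.injective_subtype
  have hy0 : LinearMap.lTensor (↥A) B.mkQ y = 0 := by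
    apply hinj
    rw [← hcomm, hker, map_zero]
  have exB2 : Function.Exact (LinearMap.lTensor (↥A) B.subtype) (LinearMap.lTensor (↥A) B.mkQ) :=
    Module.Flat.lTensor_exact (↥A) (LinearMap.exact_subtype_mkQ B)
  obtain ⟨z, hz⟩ := (exB2 y).mp hy0
  refine ⟨z, ?_⟩
  rw [← hz, ← LinearMap.comp_apply, LinearMap.rTensor_comp_lTensor]

lemma mem_tpMul_iff {i j : ℕ} {p : Submodule ℂ (⨂[ℂ]^i V)} {q : Submodule ℂ (⨂[ℂ]^j V)}
    {x : ⨂[ℂ]^(i+j) V} :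
    x ∈ tpMul i j p q ↔
      (TensorPower.mulEquiv (R := ℂ) (M := V) (n := i) (m := j)).symm x
        ∈ LinearMap.range (TensorProduct.map p.subtype q.subtype) := by
  rw [tpMul, LinearMap.range_comp]
  exact Submodule.mem_map_equiv (e := TensorPower.mulEquiv (R := ℂ) (M := V)) _

lemma tpMul_inf_le {i j : ℕ} (A : Submodule ℂ (⨂[ℂ]^i V)) (B : Submodule ℂ (⨂[ℂ]^j V)) :
    tpMul i j A ⊤ ⊓ tpMul i j ⊤ B ≤ tpMul i j A B := by
  intro x hx
  rw [Submodule.mem_inf] at hx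
  obtain ⟨hx1, hx2⟩ := hx
  rw [mem_tpMul_iff] at hx1 hx2 ⊢
  exact range_map_top_inf A B ⟨hx1, hx2⟩

end Aux

/-- For a maximal (quadratic) subproduct system with prescribed fibres up to level 2,
i.e. `H n = ⋂_{i+j=n, i,j ≥ 1} H_i ⊗ H_j` for `n > 2` and `H 2 ⊆ H 1 ⊗ H 1`,
one has `H_{m+1} = (H₁ ⊗ H_m) ∩ (H_m ⊗ H₁)` for all `m ≥ 2`. -/
theorem quadratic_fibres_two_intersections
    {V : Type*} [AddCommGroup V] [Module ℂ V] [FiniteDimensional ℂ V]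
    (H : (n : ℕ) → Submodule ℂ (⨂[ℂ]^n V))
    (hH2 : H 2 ≤ tpMul 1 1 (H 1) (H 1))
    (hmax : ∀ n : ℕ, 2 < n →
      H n = ⨅ (i : ℕ) (j : ℕ) (_ : 1 ≤ i) (_ : 1 ≤ j) (h : i + j = n),
        (h ▸ tpMul i j (H i) (H j))) :
    ∀ m : ℕ, 2 ≤ m →
      H (m + 1) =
        (Nat.add_comm 1 m ▸ tpMul 1 m (H 1) (H m)) ⊓ tpMul m 1 (H m) (H 1) := by
  intro m hm
  have h3 : 2 < m + 1 := by omega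
  apply le_antisymm
  · rw [hmax (m+1) h3]
    apply le_inf
    · exact iInf_le_of_le 1 (iInf_le_of_le m (iInf_le_of_le le_rfl
        (iInf_le_of_le (by omega) (iInf_le _ (Nat.add_comm 1 m)))))
    · exact iInf_le_of_le m (iInf_le_of_le 1 (iInf_le_of_le (by omega)
        (iInf_le_of_le le_rfl (iInf_le _ rfl))))
  · rw [hmax (m+1) h3]
    simp only [le_iInf_iff]
    intro i j hi hj hij
    rw [eqrec_eq_mapC, eqrec_eq_mapC]
    obtain ⟨a, rfl⟩ : ∃ a, i = a + 1 := ⟨i - 1, by omega⟩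
    obtain ⟨b, rfl⟩ : ∃ b, j = b + 1 := ⟨j - 1, by omega⟩
    rcases Nat.eq_zero_or_pos a with ha | ha
    · subst ha
      have hmb : m = b + 1 := by omega
      subst hmb
      exact inf_le_left
    rcases Nat.eq_zero_or_pos b with hb | hb
    · subst hb
      have hma : m = a + 1 := by omega
      subst hma
      refine le_trans inf_le_right (le_of_eq ?_)
      exact (mapC_rfl hij _).symm
    -- main case : a ≥ 1, b ≥ 1
    have haj : a + (b + 1) = m := by omega
    have hib : (a + 1) + b = m := by omega
    have hm3 : 2 < m := by omega
    have hmL : H m ≤ mapC haj (tpMul a (b+1) (H a) (H (b+1))) := by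
      rw [hmax m hm3, ← eqrec_eq_mapC]
      exact iInf_le_of_le a (iInf_le_of_le (b+1) (iInf_le_of_le ha
        (iInf_le_of_le (by omega) (iInf_le _ haj))))
    have hmR : H m ≤ mapC hib (tpMul (a+1) b (H (a+1)) (H b)) := by
      rw [hmax m hm3, ← eqrec_eq_mapC]
      exact iInf_le_of_le (a+1) (iInf_le_of_le b (iInf_le_of_le (by omega)
        (iInf_le_of_le hb (iInf_le _ hib))))
    have q1 : (a+1) + (b+1) = 1 + m := by omega
    have T1 : tpMul 1 m (H 1) (H m) ≤ mapC q1 (tpMul (a+1) (b+1) ⊤ (H (b+1))) := by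
      calc tpMul 1 m (H 1) (H m)
          ≤ tpMul 1 m ⊤ (mapC haj (tpMul a (b+1) (H a) (H (b+1)))) :=
            tpMul_mono le_top hmL
        _ = mapC (congrArg (1 + ·) haj)
              (tpMul 1 (a+(b+1)) ⊤ (tpMul a (b+1) (H a) (H (b+1)))) := by
            rw [tpMul_mapC_right]
        _ ≤ mapC (congrArg (1 + ·) haj)
              (tpMul 1 (a+(b+1)) ⊤ (tpMul a (b+1) ⊤ (H (b+1)))) :=
            mapC_mono _ (tpMul_mono le_rfl (tpMul_mono le_top le_rfl))
        _ = mapC (congrArg (1 + ·) haj)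
              (mapC (add_assoc 1 a (b+1))
                (tpMul (1+a) (b+1) (tpMul 1 a ⊤ ⊤) (H (b+1)))) := by
            rw [tpMul_assoc]
        _ ≤ mapC (congrArg (1 + ·) haj)
              (mapC (add_assoc 1 a (b+1)) (tpMul (1+a) (b+1) ⊤ (H (b+1)))) :=
            mapC_mono _ (mapC_mono _ (tpMul_mono le_top le_rfl))
        _ = mapC (congrArg (1 + ·) haj)
              (mapC (add_assoc 1 a (b+1))
                (mapC (congrArg (· + (b+1)) (Nat.add_comm (a : ℕ) 1))
                  (tpMul (a+1) (b+1) ⊤ (H (b+1))))) := by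
            rw [← mapC_top (Nat.add_comm (a : ℕ) 1), tpMul_mapC_left]
        _ = mapC q1 (tpMul (a+1) (b+1) ⊤ (H (b+1))) := by
            rw [mapC_mapC, mapC_mapC]
    have q2 : (a+1) + (b+1) = m + 1 := hij
    have T2 : tpMul m 1 (H m) (H 1) ≤ mapC q2 (tpMul (a+1) (b+1) (H (a+1)) ⊤) := by
      calc tpMul m 1 (H m) (H 1)
          ≤ tpMul m 1 (mapC hib (tpMul (a+1) b (H (a+1)) (H b))) ⊤ :=
            tpMul_mono hmR le_top
        _ = mapC (congrArg (· + 1) hib)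
              (tpMul ((a+1)+b) 1 (tpMul (a+1) b (H (a+1)) (H b)) ⊤) := by
            rw [tpMul_mapC_left]
        _ ≤ mapC (congrArg (· + 1) hib)
              (tpMul ((a+1)+b) 1 (tpMul (a+1) b (H (a+1)) ⊤) ⊤) :=
            mapC_mono _ (tpMul_mono (tpMul_mono le_rfl le_top) le_rfl)
        _ = mapC (congrArg (· + 1) hib)
              (mapC (add_assoc (a+1) b 1).symm
                (tpMul (a+1) (b+1) (H (a+1)) (tpMul b 1 ⊤ ⊤))) := by
            rw [mapC_eq_symm (add_assoc (a+1) b 1) (tpMul_assoc (H (a+1)) ⊤ ⊤)]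
        _ ≤ mapC (congrArg (· + 1) hib)
              (mapC (add_assoc (a+1) b 1).symm (tpMul (a+1) (b+1) (H (a+1)) ⊤)) :=
            mapC_mono _ (mapC_mono _ (tpMul_mono le_rfl le_top))
        _ = mapC q2 (tpMul (a+1) (b+1) (H (a+1)) ⊤) := by
            rw [mapC_mapC]
    have TL : mapC (Nat.add_comm 1 m) (tpMul 1 m (H 1) (H m))
        ≤ mapC hij (tpMul (a+1) (b+1) ⊤ (H (b+1))) := by
      have := mapC_mono (Nat.add_comm 1 m) T1
      rwa [mapC_mapC] at this
    calc mapC (Nat.add_comm 1 m) (tpMul 1 m (H 1) (H m)) ⊓ tpMul m 1 (H m) (H 1)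
        ≤ mapC hij (tpMul (a+1) (b+1) ⊤ (H (b+1)))
            ⊓ mapC hij (tpMul (a+1) (b+1) (H (a+1)) ⊤) := inf_le_inf TL T2
      _ = mapC hij (tpMul (a+1) (b+1) ⊤ (H (b+1)) ⊓ tpMul (a+1) (b+1) (H (a+1)) ⊤) :=
          (mapC_inf hij _ _).symm
      _ ≤ mapC hij (tpMul (a+1) (b+1) (H (a+1)) (H (b+1))) :=
          mapC_mono _ (le_trans (le_of_eq (inf_comm _ _)) (tpMul_inf_le _ _))
end

section
/- Let P = ∑_{i,j=1}^d a_{ij} X_i X_j with matrix A = (a_{ij}) ∈ GL_d(ℂ). Then P is a Temperley–Lieb vector (i.e., the orthogonal projection e onto ℂ·P(e) in H⊗H satisfies (e⊗1)(1⊗e)(e⊗1) = λ^{-1}(e⊗1) for some λ > 0) if and only if A·Ā is unitary up to a non-zero scalar factor, where Ā is the entrywise complex conjugate of A. -/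
variable {d : ℕ}

/-- `⟨P(e), P(e)⟩ = ∑ |a_{ij}|²` for `P(e) = ∑ a_{ij} e_i ⊗ e_j`. -/
noncomputable def tlGram (A : Matrix (Fin d) (Fin d) ℂ) : ℂ :=
  ∑ a, ∑ b, star (A a b) * A a b

/-- The operator `e ⊗ 1` on `H ⊗ H ⊗ H ≅ ℂ^{d³}` (in coordinates), where `e` is the
orthogonal projection of `H ⊗ H` onto the line spanned by `P(e) = ∑ a_{ij} e_i ⊗ e_j`. -/
noncomputable def tlE1 (A : Matrix (Fin d) (Fin d) ℂ)
    (x : Fin d → Fin d → Fin d → ℂ) : Fin d → Fin d → Fin d → ℂ :=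
  fun i j k => ((∑ a, ∑ b, star (A a b) * x a b k) * A i j) / tlGram A

/-- The operator `1 ⊗ e` on `H ⊗ H ⊗ H ≅ ℂ^{d³}` in coordinates. -/
noncomputable def tlE2 (A : Matrix (Fin d) (Fin d) ℂ)
    (x : Fin d → Fin d → Fin d → ℂ) : Fin d → Fin d → Fin d → ℂ :=
  fun i j k => ((∑ a, ∑ b, star (A a b) * x i a b) * A j k) / tlGram A

lemma tlGram_eq (A : Matrix (Fin d) (Fin d) ℂ) :
    tlGram A = ((∑ a, ∑ b, Complex.normSq (A a b) : ℝ) : ℂ) := by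
  unfold tlGram
  push_cast
  congr 1; ext a; congr 1; ext b
  rw [Complex.star_def, Complex.normSq_eq_conj_mul_self]

lemma tlGramRe_pos (hd : 2 ≤ d) (A : Matrix (Fin d) (Fin d) ℂ) (hA : IsUnit A.det)
    : 0 < (∑ a, ∑ b, Complex.normSq (A a b) : ℝ) := by
  have : Nonempty (Fin d) := ⟨⟨0, by omega⟩⟩
  have hAne : A ≠ 0 := by
    rintro rfl
    simp [Matrix.det_zero] at hA
  obtain ⟨i, j, hij⟩ : ∃ i j, A i j ≠ 0 := by
    by_contra h
    push_neg at h
    exact hAne (by ext i j; simp [h])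
  have h1 : ∀ a ∈ Finset.univ (α := Fin d), 0 ≤ ∑ b, Complex.normSq (A a b) :=
    fun a _ => Finset.sum_nonneg fun b _ => Complex.normSq_nonneg _
  refine Finset.sum_pos' h1 ⟨i, Finset.mem_univ i, ?_⟩
  refine Finset.sum_pos' (fun b _ => Complex.normSq_nonneg _) ⟨j, Finset.mem_univ j, ?_⟩
  exact Complex.normSq_pos.mpr hij

lemma tlExists_ne (hd : 2 ≤ d) (A : Matrix (Fin d) (Fin d) ℂ) (hA : IsUnit A.det) :
    ∃ i j, A i j ≠ 0 := by
  have : Nonempty (Fin d) := ⟨⟨0, by omega⟩⟩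
  by_contra h
  push_neg at h
  have : A = 0 := by ext i j; simp [h]
  rw [this] at hA
  simp [Matrix.det_zero] at hA

lemma stepB (A : Matrix (Fin d) (Fin d) ℂ) (x : Fin d → Fin d → Fin d → ℂ)
    (a b k : Fin d) :
    tlE2 A (tlE1 A x) a b k =
      ((∑ q, (∑ s, ∑ t, star (A s t) * x s t q) * (A * A.map star) a q) * A b k) /
        (tlGram A * tlGram A) := by
  simp only [tlE2, tlE1, Matrix.mul_apply, Matrix.map_apply]
  rw [Finset.sum_comm]
  have h1 : ∀ q : Fin d, (∑ p, star (A p q) * (((∑ s, ∑ t, star (A s t) * x s t q) * A a p) / tlGram A))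
      = ((∑ s, ∑ t, star (A s t) * x s t q) * ∑ p, A a p * star (A p q)) / tlGram A := by
    intro q
    rw [Finset.mul_sum, Finset.sum_div]
    congr 1; ext p; ring
  simp only [h1]
  rw [← Finset.sum_div, div_mul_eq_mul_div, div_div]

lemma starC (A : Matrix (Fin d) (Fin d) ℂ) (a k : Fin d) :
    (∑ b, star (A a b) * A b k) = star ((A * A.map star) a k) := by
  simp only [Matrix.mul_apply, Matrix.map_apply, star_sum, star_mul', star_star]

lemma tlKey (A : Matrix (Fin d) (Fin d) ℂ) (x : Fin d → Fin d → Fin d → ℂ)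
    (i j k : Fin d) :
    tlE1 A (tlE2 A (tlE1 A x)) i j k =
      ((∑ q, (∑ s, ∑ t, star (A s t) * x s t q) *
          ∑ a, (A * A.map star) a q * star ((A * A.map star) a k)) * A i j) /
        (tlGram A * tlGram A * tlGram A) := by
  conv_lhs => rw [tlE1]
  simp only [stepB]
  have h1 : ∀ a : Fin d, (∑ b, star (A a b) *
      (((∑ q, (∑ s, ∑ t, star (A s t) * x s t q) * (A * A.map star) a q) * A b k) /
        (tlGram A * tlGram A)))
      = ((∑ q, (∑ s, ∑ t, star (A s t) * x s t q) * (A * A.map star) a q) *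
          star ((A * A.map star) a k)) / (tlGram A * tlGram A) := by
    intro a
    rw [← starC]
    rw [Finset.mul_sum, Finset.sum_div]
    congr 1; ext b; ring
  simp only [h1]
  rw [← Finset.sum_div, div_mul_eq_mul_div, div_div]
  congr 2
  have h2 : ∀ a : Fin d,
      (∑ q, (∑ s, ∑ t, star (A s t) * x s t q) * (A * A.map star) a q) *
        star ((A * A.map star) a k)
      = ∑ q, (∑ s, ∑ t, star (A s t) * x s t q) *
          ((A * A.map star) a q * star ((A * A.map star) a k)) := by
    intro a
    rw [Finset.sum_mul]
    congr 1; ext q; ring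
  simp only [h2]
  rw [Finset.sum_comm]
  congr 1; ext q
  rw [Finset.mul_sum]

/-- `P = ∑ a_{ij} X_i X_j` with `A = (a_{ij})` invertible is Temperley–Lieb, i.e.
`(e⊗1)(1⊗e)(e⊗1) = λ⁻¹ (e⊗1)` for some `λ > 0`, if and only if `A·Ā` is unitary up
to a non-zero scalar factor. -/
theorem temperley_lieb_iff_AAbar_unitary (hd : 2 ≤ d)
    (A : Matrix (Fin d) (Fin d) ℂ) (hA : IsUnit A.det) :
    (∃ lam : ℝ, 0 < lam ∧ ∀ (x : Fin d → Fin d → Fin d → ℂ) (i j k : Fin d),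
        tlE1 A (tlE2 A (tlE1 A x)) i j k = ((lam : ℂ))⁻¹ * tlE1 A x i j k) ↔
    ∃ c : ℂ, c ≠ 0 ∧ c • (A * A.map star) ∈ Matrix.unitaryGroup (Fin d) ℂ := by
  set C := A * A.map star with hC
  set gr : ℝ := ∑ a, ∑ b, Complex.normSq (A a b) with hgr
  have hgrpos : 0 < gr := tlGramRe_pos hd A hA
  have hg : tlGram A = (gr : ℂ) := tlGram_eq A
  have hgne : tlGram A ≠ 0 := by
    rw [hg]; exact_mod_cast hgrpos.ne'
  constructor
  · rintro ⟨lam, hlam, hEq⟩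
    obtain ⟨s0, t0, hA0⟩ := tlExists_ne hd A hA
    -- extract entries of D
    have hD : ∀ q0 k : Fin d, (∑ a, C a q0 * star (C a k))
        = if k = q0 then (tlGram A * tlGram A) / (lam : ℂ) else 0 := by
      intro q0 k
      set x : Fin d → Fin d → Fin d → ℂ :=
        fun s t q => if s = s0 then (if t = t0 then (if q = q0 then (star (A s0 t0))⁻¹ else 0) else 0) else 0 with hx
      have hF : ∀ q, (∑ s, ∑ t, star (A s t) * x s t q) = if q = q0 then 1 else 0 := by
        intro q
        simp only [hx, mul_ite, mul_zero, Finset.sum_ite_eq', Finset.mem_univ, if_true]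
        by_cases hq : q = q0 <;> simp [hq, hA0]
      have h := hEq x s0 t0 k
      rw [tlKey] at h
      simp only [tlE1, hF, ← hC] at h
      simp only [ite_mul, one_mul, zero_mul, Finset.sum_ite_eq', Finset.mem_univ,
        if_true] at h
      have hlamne : (lam : ℂ) ≠ 0 := by exact_mod_cast hlam.ne'
      by_cases hk : k = q0
      · subst hk
        simp only [if_pos rfl, one_mul] at h ⊢
        field_simp at h
        simp only [if_true, Complex.star_def]
        rw [eq_div_iff hlamne]
        have h2 : ((∑ a, C a k * (starRingEnd ℂ) (C a k)) * (lam : ℂ)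
            - tlGram A * tlGram A) * (A s0 t0 * tlGram A) = 0 := by
          simp only [if_true, ↓reduceIte, Complex.star_def] at h
          linear_combination (tlGram A) * h
        rcases mul_eq_zero.mp h2 with h3 | h3
        · linear_combination h3
        · exact absurd h3 (mul_ne_zero hA0 hgne)
      · simp only [hk, if_false, zero_mul, zero_div, mul_zero] at h ⊢
        rw [div_eq_zero_iff] at h
        rcases h with h | h
        · rcases mul_eq_zero.mp h with h | h
          · exact h
          · exact absurd h hA0
        · exact absurd h (mul_ne_zero (mul_ne_zero hgne hgne) hgne)
    -- build the unitary scalar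
    set mu : ℝ := gr * gr / lam with hmu
    have hmupos : 0 < mu := by positivity
    have hCC : star C * C = ((mu : ℝ) : ℂ) • (1 : Matrix (Fin d) (Fin d) ℂ) := by
      ext q k
      have h1 : (star C * C) q k = star (∑ a, C a q * star (C a k)) := by
        simp only [Matrix.mul_apply, Matrix.star_apply, star_sum, star_mul', star_star]
      rw [h1, hD q k, hg, Matrix.smul_apply, Matrix.one_apply]
      by_cases hk : k = q
      · subst hk
        rw [if_pos rfl, if_pos rfl]
        have : ((gr : ℂ) * (gr : ℂ) / (lam : ℂ)) = ((mu : ℝ) : ℂ) := by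
          rw [hmu]; push_cast; ring
        rw [this, Complex.star_def, Complex.conj_ofReal, smul_eq_mul, mul_one]
      · rw [if_neg hk, if_neg (fun h => hk h.symm), star_zero, smul_zero]
    refine ⟨((Real.sqrt mu)⁻¹ : ℝ), ?_, ?_⟩
    · simp only [ne_eq, Complex.ofReal_eq_zero, inv_eq_zero]
      exact (Real.sqrt_pos.mpr hmupos).ne'
    · rw [Matrix.mem_unitaryGroup_iff']
      rw [star_smul, smul_mul_smul_comm, hCC, smul_smul]
      have hr1 : ((Real.sqrt mu)⁻¹ * (Real.sqrt mu)⁻¹ * mu : ℝ) = 1 := by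
        rw [← mul_inv, Real.mul_self_sqrt hmupos.le]
        field_simp
      have : (star (((Real.sqrt mu)⁻¹ : ℝ) : ℂ) * (((Real.sqrt mu)⁻¹ : ℝ) : ℂ)) * ((mu : ℝ) : ℂ) = 1 := by
        rw [Complex.star_def, Complex.conj_ofReal, ← Complex.ofReal_mul, ← Complex.ofReal_mul,
          hr1, Complex.ofReal_one]
      rw [this, one_smul]
  · rintro ⟨c, hc, hU⟩
    rw [Matrix.mem_unitaryGroup_iff'] at hU
    rw [star_smul, smul_mul_smul_comm] at hU
    set r : ℝ := Complex.normSq c with hr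
    have hrpos : 0 < r := Complex.normSq_pos.mpr hc
    have hrc : star c * c = ((r : ℝ) : ℂ) := by
      rw [Complex.star_def, ← Complex.normSq_eq_conj_mul_self]
    have hCC : star C * C = (((r : ℝ) : ℂ))⁻¹ • (1 : Matrix (Fin d) (Fin d) ℂ) := by
      have hrne : ((r : ℝ) : ℂ) ≠ 0 := by exact_mod_cast hrpos.ne'
      rw [hrc] at hU
      calc star C * C = (((r:ℝ):ℂ))⁻¹ • (((r:ℝ):ℂ) • (star C * C)) := by
            rw [smul_smul, inv_mul_cancel₀ hrne, one_smul]
        _ = (((r:ℝ):ℂ))⁻¹ • (1 : Matrix (Fin d) (Fin d) ℂ) := by rw [hU]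
    have hD : ∀ q k : Fin d, (∑ a, C a q * star (C a k))
        = if q = k then (((r : ℝ) : ℂ))⁻¹ else 0 := by
      intro q k
      have h1 : (∑ a, C a q * star (C a k)) = star ((star C * C) q k) := by
        simp only [Matrix.mul_apply, Matrix.star_apply, star_sum, star_mul', star_star]
      rw [h1, hCC, Matrix.smul_apply, Matrix.one_apply]
      by_cases hk : q = k
      · simp [hk, ← Complex.ofReal_inv, Complex.conj_ofReal]
      · simp [hk]
    refine ⟨gr * gr * r, by positivity, ?_⟩
    intro x i j k
    rw [tlKey, ← hC]
    simp only [hD, mul_ite, mul_zero]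
    rw [Finset.sum_ite_eq' Finset.univ k
      (fun q => (∑ s, ∑ t, star (A s t) * x s t q) * (((r : ℝ) : ℂ))⁻¹)]
    simp only [Finset.mem_univ, if_true, tlE1, hg]
    have hgrne : (gr : ℂ) ≠ 0 := by exact_mod_cast hgrpos.ne'
    have hrne : ((r : ℝ) : ℂ) ≠ 0 := by exact_mod_cast hrpos.ne'
    have hlamne : ((gr * gr * r : ℝ) : ℂ) ≠ 0 := by
      push_cast; exact mul_ne_zero (mul_ne_zero hgrne hgrne) hrne
    field_simp
    push_cast
    ring
end

section
/- For each n ≥ 1, the vector v_n = ∑_{i=1}^{n+1} (−1)^i (q^{−n+i}/[n+1]_q)^{1/2} e_i ⊗ e_{n+2−i} in ℂ^{n+1} ⊗ ℂ^{n+1} is a Temperley–Lieb vector: its coefficient matrix A (with A_{i,n+2−i} = (−1)^i(q^{−n+i}/[n+1]_q)^{1/2} and all other entries 0) satisfies that A·Ā is unitary up to a non-zero scalar. -/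
/-- The symmetric `q`-integer `[n]_q`, with `[n]₁ = n`. -/
noncomputable def qInt (q : ℝ) (n : ℕ) : ℝ :=
  if q = 1 then n else (q ^ n - q⁻¹ ^ n) / (q - q⁻¹)

/-- Coefficient matrix of the vector
`v_n = ∑_{i=1}^{n+1} (−1)^i (q^{−n+i}/[n+1]_q)^{1/2} e_i ⊗ e_{n+2−i}`
(indices shifted to `0,…,n`): `A_{i,j} = (−1)^{i+1} (q^{i+1−n}/[n+1]_q)^{1/2}` when
`i + j = n`, and `0` otherwise. -/
noncomputable def suqDetMatrix (q : ℝ) (n : ℕ) :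
    Matrix (Fin (n + 1)) (Fin (n + 1)) ℂ :=
  fun i j =>
    if (i : ℕ) + (j : ℕ) = n then
      (-1 : ℂ) ^ ((i : ℕ) + 1) *
        (Real.sqrt ((q ^ ((i : ℕ) + 1) / q ^ n) / qInt q (n + 1)) : ℂ)
    else 0

lemma qInt_pos (q : ℝ) (hq0 : 0 < q) (hq1 : q ≤ 1) (n : ℕ) : 0 < qInt q (n + 1) := by
  unfold qInt
  by_cases h : q = 1
  · simp [h]; positivity
  · have hq1' : q < 1 := lt_of_le_of_ne hq1 h
    rw [if_neg h]
    have hinv : 1 < q⁻¹ := (one_lt_inv₀ hq0).2 hq1'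
    have hlt : q < q⁻¹ := lt_trans hq1' hinv
    have h1 : q ^ (n + 1) < q⁻¹ ^ (n + 1) :=
      pow_lt_pow_left₀ hlt (le_of_lt hq0) (Nat.succ_ne_zero n)
    exact div_pos_of_neg_of_neg (by linarith) (by linarith)

/-- The `SU_q(2)`-determinant vector is Temperley–Lieb: its coefficient matrix `A`
satisfies that `A·Ā` is unitary up to a non-zero scalar. -/
theorem suq_det_vector_is_temperley_lieb (q : ℝ) (hq : q ∈ Set.Ioc (0 : ℝ) 1)
    (n : ℕ) (hn : 1 ≤ n) :
    ∃ c : ℂ, c ≠ 0 ∧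
      c • (suqDetMatrix q n * (suqDetMatrix q n).map star) ∈
        Matrix.unitaryGroup (Fin (n + 1)) ℂ := by
  obtain ⟨hq0, hq1⟩ := hq
  have hqne : q ≠ 0 := ne_of_gt hq0
  set D := qInt q (n + 1) with hDdef
  have hD : 0 < D := qInt_pos q hq0 hq1 n
  set K := Real.sqrt (q ^ (n + 2) / (q ^ n * q ^ n * D ^ 2)) with hKdef
  have hK : 0 < K := Real.sqrt_pos.2 (by positivity)
  have hcne : ((-1 : ℂ) ^ n * (K : ℂ)) ≠ 0 := by
    apply mul_ne_zero
    · exact pow_ne_zero _ (by norm_num)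
    · exact_mod_cast ne_of_gt hK
  have hM : suqDetMatrix q n * (suqDetMatrix q n).map star
      = ((-1 : ℂ) ^ n * (K : ℂ)) • (1 : Matrix (Fin (n + 1)) (Fin (n + 1)) ℂ) := by
    ext i k
    rw [Matrix.mul_apply]
    by_cases hik : i = k
    · subst hik
      have hilt : (i : ℕ) < n + 1 := i.isLt
      rw [Matrix.smul_apply, Matrix.one_apply_eq, smul_eq_mul, mul_one]
      rw [Finset.sum_eq_single (⟨n - (i : ℕ), by omega⟩ : Fin (n + 1))]
      · simp only [suqDetMatrix, Matrix.map_apply]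
        have h1 : (i : ℕ) + (n - (i : ℕ)) = n := by omega
        have h2 : (n - (i : ℕ)) + (i : ℕ) = n := by omega
        rw [if_pos h1, if_pos h2]
        rw [star_mul', star_pow, Complex.star_def, map_neg, map_one,
          Complex.conj_ofReal]
        have hs : (Real.sqrt ((q ^ ((i : ℕ) + 1) / q ^ n) / D) : ℂ) *
            (Real.sqrt ((q ^ (n - (i : ℕ) + 1) / q ^ n) / D) : ℂ) = (K : ℂ) := by
          rw [← Complex.ofReal_mul]
          congr 1
          rw [← Real.sqrt_mul (by positivity)]
          congr 1
          have hp : q ^ ((i : ℕ) + 1) * q ^ (n - (i : ℕ) + 1) = q ^ (n + 2) := by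
            rw [← pow_add]; congr 1; omega
          field_simp
          linear_combination hp
        have hsign : (-1 : ℂ) ^ ((i : ℕ) + 1) * (-1 : ℂ) ^ (n - (i : ℕ) + 1)
            = (-1 : ℂ) ^ n := by
          rw [← pow_add]
          have : (i : ℕ) + 1 + (n - (i : ℕ) + 1) = n + 2 := by omega
          rw [this, pow_add]
          norm_num
        calc (-1 : ℂ) ^ ((i : ℕ) + 1) * (Real.sqrt ((q ^ ((i : ℕ) + 1) / q ^ n) / D) : ℂ) *
              ((-1 : ℂ) ^ (n - (i : ℕ) + 1) * (Real.sqrt ((q ^ (n - (i : ℕ) + 1) / q ^ n) / D) : ℂ))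
            = ((-1 : ℂ) ^ ((i : ℕ) + 1) * (-1 : ℂ) ^ (n - (i : ℕ) + 1)) *
              ((Real.sqrt ((q ^ ((i : ℕ) + 1) / q ^ n) / D) : ℂ) *
                (Real.sqrt ((q ^ (n - (i : ℕ) + 1) / q ^ n) / D) : ℂ)) := by ring
          _ = (-1 : ℂ) ^ n * (K : ℂ) := by rw [hsign, hs]
      · intro j _ hj
        have hne : (i : ℕ) + (j : ℕ) ≠ n := by
          intro h
          exact hj (Fin.ext (by simp only [Fin.val_mk]; omega))
        simp [suqDetMatrix, hne]
      · intro h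
        exact absurd (Finset.mem_univ _) h
    · rw [Matrix.smul_apply, Matrix.one_apply_ne hik, smul_zero]
      apply Finset.sum_eq_zero
      intro j _
      by_cases h1 : (i : ℕ) + (j : ℕ) = n
      · have h2 : (j : ℕ) + (k : ℕ) ≠ n := by
          intro h
          exact hik (Fin.ext (by omega))
        simp [suqDetMatrix, h2]
      · simp [suqDetMatrix, h1]
  refine ⟨((-1 : ℂ) ^ n * (K : ℂ))⁻¹, inv_ne_zero hcne, ?_⟩
  rw [hM, smul_smul, inv_mul_cancel₀ hcne, one_smul]
  exact Submonoid.one_mem _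
end
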